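/- For every integer k ≥ 1, E f_k(𝒯) = k(k+3)/((k+1)(k+2)) · 2^{k−1}/k! = 2^{k−1}/k! − 2^k/(k+2)!, where 𝒯 is the random binary search tree with random size distributed as P(|𝒯| = n) = 2/((n+1)(n+2)) for n ≥ 1, and f_k(T) is the number of green chains of length k in T starting at the root. -/

import Mathlib

open MeasureTheory

inductive BTree : Type
  | nil : BTree
  | node : BTree → BTree → BTree
deriving DecidableEq

namespace BTree

instance : MeasurableSpace BTree := ⊤

def size : BTree → ℕ
  | nil => 0
  | node l r => size l + size r + 1

def left : BTree → BTree
  | nil => nil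
  | node l _ => l

def right : BTree → BTree
  | nil => nil
  | node _ r => r

/-- The number of maximal green nodes (green = outdegree ≤ 1, maximal = no green
strict ancestor): a green root gives the unique maximal green node. -/
def F : BTree → ℕ
  | nil => 0
  | node l r => if l = nil ∨ r = nil then 1 else F l + F r

/-- The toll function `f(T) = F(T) - F(T_L) - F(T_R)`. -/
def f : BTree → ℤ
  | nil => 0
  | node nil r => 1 - F r
  | node l nil => 1 - F l
  | node _ _ => 0

/-- The list of all subtrees `T_v` rooted at nodes `v` of `T`. -/
def subtrees : BTree → List BTree
  | nil => []
  | node l r => node l r :: (subtrees l ++ subtrees r)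

/-- The root is green: the tree is nonempty and has at most one root child. -/
def greenRoot : BTree → Prop
  | nil => False
  | node l r => l = nil ∨ r = nil

instance : DecidablePred greenRoot := fun t => by
  cases t <;> simp [greenRoot] <;> infer_instance

/-- The random binary search tree with `n` nodes. -/
noncomputable def bst : ℕ → PMF BTree
  | 0 => PMF.pure nil
  | n + 1 =>
    (PMF.uniformOfFintype (Fin (n + 1))).bind fun i =>
      (bst i.val).bind fun l => (bst (n - i.val)).bind fun r => PMF.pure (node l r)
  decreasing_by
    · exact i.isLt
    · omega

/-- `fchain k T` is the number of green chains of length `k` in `T` starting at the root. -/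
def fchain : ℕ → BTree → ℕ
  | 0, _ => 0
  | 1, nil => 0
  | 1, node l r => if l = nil ∨ r = nil then 1 else 0
  | _ + 2, nil => 0
  | k + 2, node l r =>
    if l = nil ∨ r = nil then
      ((subtrees l).map (fun t => fchain (k + 1) t)).sum
        + ((subtrees r).map (fun t => fchain (k + 1) t)).sum
    else 0
  termination_by k _ => k

/-- `Fchain k T` is the total number of green chains of length `k` in `T`. -/
def Fchain (k : ℕ) (T : BTree) : ℕ := ((subtrees T).map (fchain k)).sum

end BTree

open BTree in
/-- The random binary search tree `𝒯` with random size, `P(|𝒯| = n) = 2/((n+1)(n+2))`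
for `n ≥ 1` (indexed below by `n+1`). -/
noncomputable def cT : MeasureTheory.Measure BTree :=
  MeasureTheory.Measure.sum fun n : ℕ =>
    (ENNReal.ofReal (2 / (((n : ℝ) + 2) * ((n : ℝ) + 3)))) • (BTree.bst (n + 1)).toMeasure

/-!
Let `M_k(n)` and `L_k(n)` be the expected numbers of green chains of length `k` in `T_n`, in
total and starting at the root. Splitting `T_{n+1}` at its root, whose left subtree is `T_i` with
`i` uniform on `{0, …, n}`, gives `M_k(n+1) = L_k(n+1) + 2/(n+1) · ∑_{i ≤ n} M_k(i)`.
The root is green only when one subtree is empty, so `L_1(n+1) = 2/(n+1)` for `n ≥ 1` and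
`L_{k+1}(n+1) = 2 M_k(n)/(n+1)`. Solving the recursion, `M_k(n)` vanishes for `n < k`, equals
the probability `2^{k-1}/k!` that `T_k` is a path at `n = k`, and is affine in `n` beyond, with
slope `a_k = k(k+3)/((k+1)(k+2)) · 2^{k-1}/k!`. Averaging `L_k(n+1)` against
`P(|𝒯| = n+1) = 2/((n+2)(n+3))` telescopes, and the sum is exactly `a_k`.
-/

open Finset Filter Topology
open scoped ENNReal Nat

namespace PMF

variable {α β : Type*}

/-- Expectations are taken in `ℝ≥0∞`, where linearity and exchanging sums need no integrability;
finiteness matters only when passing to `ℝ`. -/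
noncomputable def lexpect (p : PMF α) (f : α → ℝ≥0∞) : ℝ≥0∞ := ∑' a, p a * f a

theorem lintegral_toMeasure_eq_lexpect [MeasurableSpace α] [Countable α]
    [MeasurableSingletonClass α] (p : PMF α) (f : α → ℝ≥0∞) :
    ∫⁻ a, f a ∂p.toMeasure = p.lexpect f := by
  rw [MeasureTheory.lintegral_countable']
  exact tsum_congr fun a => by
    rw [toMeasure_apply_singleton _ _ (measurableSet_singleton a), mul_comm]

theorem lexpect_pure (a : α) (f : α → ℝ≥0∞) : (pure a).lexpect f = f a := by
  rw [lexpect, tsum_eq_single a fun b hb => by simp [pure_apply, hb]]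
  simp

theorem lexpect_bind (p : PMF α) (q : α → PMF β) (f : β → ℝ≥0∞) :
    (p.bind q).lexpect f = ∑' a, p a * (q a).lexpect f := calc
  (p.bind q).lexpect f = ∑' b, ∑' a, p a * q a b * f b :=
    tsum_congr fun b => by rw [bind_apply, ENNReal.tsum_mul_right]
  _ = ∑' a, ∑' b, p a * (q a b * f b) := by
    rw [ENNReal.tsum_comm]; simp only [mul_assoc]
  _ = ∑' a, p a * (q a).lexpect f := tsum_congr fun a => ENNReal.tsum_mul_left

theorem lexpect_const (p : PMF α) (c : ℝ≥0∞) : p.lexpect (fun _ => c) = c := by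
  rw [lexpect, ENNReal.tsum_mul_right, tsum_coe, one_mul]

theorem lexpect_add (p : PMF α) (f g : α → ℝ≥0∞) :
    p.lexpect (fun a => f a + g a) = p.lexpect f + p.lexpect g := by
  simp only [lexpect, mul_add]
  exact ENNReal.tsum_add

theorem lexpect_congr {p : PMF α} {f g : α → ℝ≥0∞} (h : ∀ a ∈ p.support, f a = g a) :
    p.lexpect f = p.lexpect g := by
  refine tsum_congr fun a => ?_
  by_cases ha : a ∈ p.support
  · rw [h a ha]
  · rw [apply_eq_zero_iff p a |>.2 ha, zero_mul, zero_mul]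

theorem lexpect_ne_top {p : PMF α} (hp : p.support.Finite) {f : α → ℝ≥0∞}
    (hf : ∀ a, f a ≠ ⊤) : p.lexpect f ≠ ⊤ := by
  rw [lexpect, tsum_eq_sum (s := hp.toFinset) fun a ha => by
    rw [apply_eq_zero_iff p a |>.2 (by simpa using ha), zero_mul]]
  exact ENNReal.sum_ne_top.2 fun a _ => ENNReal.mul_ne_top (p.apply_ne_top a) (hf a)

end PMF

namespace BTree

def toNat : BTree → ℕ
  | nil => 0
  | node l r => Nat.pair l.toNat r.toNat + 1

theorem toNat_injective : Function.Injective toNat := by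
  intro t s h
  induction t generalizing s with
  | nil => cases s <;> simp_all [toNat]
  | node l r ihl ihr =>
    cases s with
    | nil => simp [toNat] at h
    | node l' r' =>
      obtain ⟨hl, hr⟩ := Nat.pair_eq_pair.mp (Nat.succ_injective h)
      rw [ihl hl, ihr hr]

instance : Countable BTree := toNat_injective.countable

instance : MeasurableSingletonClass BTree := ⟨fun _ => MeasurableSpace.measurableSet_top⟩

theorem bst_zero : bst 0 = PMF.pure nil := by rw [bst]

theorem lexpect_bst_succ (n : ℕ) (f : BTree → ℝ≥0∞) :
    (bst (n + 1)).lexpect f = (n + 1 : ℝ≥0∞)⁻¹ *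
      ∑ i ∈ range (n + 1),
        (bst i).lexpect fun l => (bst (n - i)).lexpect fun r => f (node l r) := by
  rw [bst, PMF.lexpect_bind, tsum_fintype, ← Fin.sum_univ_eq_sum_range, mul_sum]
  refine sum_congr rfl fun i _ => ?_
  simp only [PMF.uniformOfFintype_apply, Fintype.card_fin, Nat.cast_add, Nat.cast_one,
    PMF.lexpect_bind, PMF.lexpect_pure]
  rfl

theorem size_eq_of_mem_support_bst {n : ℕ} {t : BTree} (ht : t ∈ (bst n).support) :
    t.size = n := by
  induction n using Nat.strong_induction_on generalizing t with
  | _ n ih =>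
    cases n with
    | zero => rw [bst_zero, PMF.support_pure, Set.mem_singleton_iff] at ht; rw [ht, size]
    | succ n =>
      simp only [bst, PMF.support_bind, PMF.support_pure, Set.mem_iUnion,
        Set.mem_singleton_iff] at ht
      obtain ⟨i, -, l, hl, r, hr, rfl⟩ := ht
      rw [size, ih i i.isLt hl, ih (n - i) (by omega) hr]
      omega

theorem ne_nil_of_mem_support_bst {n : ℕ} (hn : n ≠ 0) {t : BTree}
    (ht : t ∈ (bst n).support) : t ≠ nil := by
  rintro rfl
  exact hn (size_eq_of_mem_support_bst ht).symm

theorem finite_support_bst (n : ℕ) : (bst n).support.Finite := by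
  induction n using Nat.strong_induction_on with
  | _ n ih =>
    cases n with
    | zero => rw [bst_zero, PMF.support_pure]; exact Set.finite_singleton _
    | succ n =>
      rw [bst]
      simp only [PMF.support_bind, PMF.support_pure]
      exact (Set.toFinite _).biUnion fun i _ => (ih i i.isLt).biUnion fun _ _ =>
        (ih (n - i) (by omega)).biUnion fun _ _ => Set.finite_singleton _

theorem lexpect_bst_natCast_ne_top (n : ℕ) (f : BTree → ℕ) :
    (bst n).lexpect (fun t => (f t : ℝ≥0∞)) ≠ ⊤ :=
  PMF.lexpect_ne_top (finite_support_bst n) fun _ => ENNReal.natCast_ne_top _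

/-- In `T_{n+1}` with `n ≥ 1`, the root has an empty subtree only when the split is at `i = 0`
or `i = n`, and then the other subtree is `T_n`. -/
theorem lexpect_bst_succ_of_green {n : ℕ} (hn : n ≠ 0) {f : BTree → ℝ≥0∞}
    (hf : ∀ l r, l ≠ nil → r ≠ nil → f (node l r) = 0) :
    (bst (n + 1)).lexpect f = (n + 1 : ℝ≥0∞)⁻¹ *
      ((bst n).lexpect (fun r => f (node nil r)) + (bst n).lexpect (fun l => f (node l nil))) := by
  rw [lexpect_bst_succ, sum_range_succ, range_eq_Ico, sum_eq_sum_Ico_succ_bot (by omega)]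
  have hmiddle : ∑ i ∈ Ico 1 n,
      (bst i).lexpect (fun l => (bst (n - i)).lexpect fun r => f (node l r)) = 0 := by
    refine sum_eq_zero fun i hi => ?_
    obtain ⟨hi1, hin⟩ := mem_Ico.1 hi
    rw [← PMF.lexpect_const (bst i) 0]
    refine PMF.lexpect_congr fun l hl => ?_
    rw [← PMF.lexpect_const (bst (n - i)) 0]
    exact PMF.lexpect_congr fun r hr =>
      hf l r (ne_nil_of_mem_support_bst (by omega) hl) (ne_nil_of_mem_support_bst (by omega) hr)
  simp only [hmiddle, bst_zero, PMF.lexpect_pure, Nat.sub_zero, Nat.sub_self, add_zero]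

theorem Fchain_nil (k : ℕ) : Fchain k nil = 0 := rfl

theorem Fchain_node (k : ℕ) (l r : BTree) :
    Fchain k (node l r) = fchain k (node l r) + Fchain k l + Fchain k r := by
  simp [Fchain, subtrees, add_assoc]

theorem fchain_one_node (l r : BTree) :
    fchain 1 (node l r) = if l = nil ∨ r = nil then 1 else 0 := by
  rw [fchain]

theorem fchain_add_two_node (k : ℕ) (l r : BTree) :
    fchain (k + 2) (node l r) =
      if l = nil ∨ r = nil then Fchain (k + 1) l + Fchain (k + 1) r else 0 := by
  rw [fchain]; rfl

/-- `L_k(n)` in the notation above. -/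
noncomputable def rootChainMean (k n : ℕ) : ℝ :=
  ((bst n).lexpect fun t => (fchain k t : ℝ≥0∞)).toReal

/-- `M_k(n)` in the notation above. -/
noncomputable def chainMean (k n : ℕ) : ℝ :=
  ((bst n).lexpect fun t => (Fchain k t : ℝ≥0∞)).toReal

theorem chainMean_zero (k : ℕ) : chainMean k 0 = 0 := by
  rw [chainMean, bst_zero, PMF.lexpect_pure, Fchain_nil, Nat.cast_zero, ENNReal.toReal_zero]

theorem toReal_natCast_add_one_inv (n : ℕ) :
    ((n + 1 : ℝ≥0∞)⁻¹).toReal = ((n : ℝ) + 1)⁻¹ := by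
  rw [ENNReal.toReal_inv, ← Nat.cast_succ, ENNReal.toReal_natCast, Nat.cast_succ]

theorem rootChainMean_one_succ (n : ℕ) :
    rootChainMean 1 (n + 1) = (if n = 0 then 1 else 2) / ((n : ℝ) + 1) := by
  rcases eq_or_ne n 0 with rfl | hn
  · simp [rootChainMean, lexpect_bst_succ, bst_zero, PMF.lexpect_pure, fchain_one_node]
  · rw [rootChainMean, lexpect_bst_succ_of_green hn fun l r hl hr => by
      rw [fchain_one_node, if_neg (by tauto), Nat.cast_zero]]
    simp only [fchain_one_node, true_or, or_true, if_true, Nat.cast_one, PMF.lexpect_const]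
    rw [ENNReal.toReal_mul, toReal_natCast_add_one_inv, if_neg hn]
    norm_num [div_eq_inv_mul]

theorem rootChainMean_add_two_succ (k n : ℕ) :
    rootChainMean (k + 2) (n + 1) = 2 * chainMean (k + 1) n / ((n : ℝ) + 1) := by
  rcases eq_or_ne n 0 with rfl | hn
  · simp [rootChainMean, chainMean_zero, lexpect_bst_succ, bst_zero, PMF.lexpect_pure,
      fchain_add_two_node, Fchain_nil]
  · rw [rootChainMean, lexpect_bst_succ_of_green hn fun l r hl hr => by
      rw [fchain_add_two_node, if_neg (by tauto), Nat.cast_zero]]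
    simp only [fchain_add_two_node, true_or, or_true, if_true, Fchain_nil, zero_add, add_zero]
    rw [ENNReal.toReal_mul, toReal_natCast_add_one_inv,
      ENNReal.toReal_add (lexpect_bst_natCast_ne_top _ _) (lexpect_bst_natCast_ne_top _ _),
      chainMean]
    ring

theorem chainMean_succ (k n : ℕ) :
    chainMean k (n + 1) =
      rootChainMean k (n + 1) + 2 * (∑ i ∈ range (n + 1), chainMean k i) / ((n : ℝ) + 1) := by
  have hsplit : (bst (n + 1)).lexpect (fun t => (Fchain k t : ℝ≥0∞)) =
      (bst (n + 1)).lexpect (fun t => (fchain k t : ℝ≥0∞)) + (n + 1 : ℝ≥0∞)⁻¹ *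
        ∑ i ∈ range (n + 1), ((bst i).lexpect (fun t => (Fchain k t : ℝ≥0∞)) +
          (bst (n - i)).lexpect (fun t => (Fchain k t : ℝ≥0∞))) := by
    simp only [lexpect_bst_succ, Fchain_node, Nat.cast_add, PMF.lexpect_add, PMF.lexpect_const,
      sum_add_distrib, mul_add]
    ring
  have hreflect :
      ∑ i ∈ range (n + 1), chainMean k (n - i) = ∑ i ∈ range (n + 1), chainMean k i :=
    sum_range_reflect (chainMean k) (n + 1)
  have hfin (m : ℕ) : (bst m).lexpect (fun t => (Fchain k t : ℝ≥0∞)) ≠ ⊤ :=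
    lexpect_bst_natCast_ne_top m _
  have hfin_sum (i : ℕ) : (bst i).lexpect (fun t => (Fchain k t : ℝ≥0∞)) +
      (bst (n - i)).lexpect (fun t => (Fchain k t : ℝ≥0∞)) ≠ ⊤ :=
    ENNReal.add_ne_top.2 ⟨hfin i, hfin (n - i)⟩
  rw [chainMean, hsplit, ENNReal.toReal_add (lexpect_bst_natCast_ne_top _ _)
      (ENNReal.mul_ne_top (by simp) (ENNReal.sum_ne_top.2 fun i _ => hfin_sum i)),
    ENNReal.toReal_mul, toReal_natCast_add_one_inv, ENNReal.toReal_sum fun i _ => hfin_sum i]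
  simp only [ENNReal.toReal_add (hfin _) (hfin _)]
  change rootChainMean k (n + 1) +
      ((n : ℝ) + 1)⁻¹ * ∑ i ∈ range (n + 1), (chainMean k i + chainMean k (n - i)) = _
  rw [sum_add_distrib, hreflect]
  ring

noncomputable def pathProb (k : ℕ) : ℝ := 2 ^ k / (2 * k !)

noncomputable def chainSlope (k : ℕ) : ℝ :=
  (k : ℝ) * (k + 3) / (((k : ℝ) + 1) * ((k : ℝ) + 2)) * pathProb k

noncomputable def chainIntercept (k : ℕ) : ℝ :=
  -(((k : ℝ) ^ 2 + k - 4) / ((k : ℝ) + 2) * pathProb k)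

/-- The closed form of `chainMean k n` for `k ≥ 1`. At `k = 0` it is not `chainMean 0 = 0`, but
the values `pathProb 0 = 1/2`, `chainSlope 0 = 0`, `chainIntercept 0 = 1` make
`rootChainMean (j + 1) (n + 1) = 2 * chainMeanFormula j n / (n + 1)` hold for `j = 0` too. -/
noncomputable def chainMeanFormula (k n : ℕ) : ℝ :=
  if n < k then 0 else if n = k then pathProb k else chainSlope k * n + chainIntercept k

theorem chainMeanFormula_of_lt {k n : ℕ} (h : n < k) : chainMeanFormula k n = 0 := if_pos h

theorem chainMeanFormula_self (k : ℕ) : chainMeanFormula k k = pathProb k := by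
  rw [chainMeanFormula, if_neg (lt_irrefl k), if_pos rfl]

theorem chainMeanFormula_of_gt {k n : ℕ} (h : k < n) :
    chainMeanFormula k n = chainSlope k * n + chainIntercept k := by
  rw [chainMeanFormula, if_neg (by omega), if_neg (by omega)]

theorem pathProb_succ (k : ℕ) : pathProb (k + 1) = 2 * pathProb k / ((k : ℝ) + 1) := by
  rw [pathProb, pathProb, Nat.factorial_succ]
  push_cast
  field_simp
  ring

theorem sum_range_chainMeanFormula (k n : ℕ) :
    ∑ i ∈ range (n + 1), chainMeanFormula k i = if n < k then 0 else
      pathProb k + chainSlope k * ((n : ℝ) * (n + 1) - (k : ℝ) * (k + 1)) / 2 +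
        chainIntercept k * ((n : ℝ) - k) := by
  induction n with
  | zero =>
    rcases Nat.eq_zero_or_pos k with rfl | hk
    · simp [chainMeanFormula_self]
    · rw [sum_range_one, chainMeanFormula_of_lt hk, if_pos hk]
  | succ n ih =>
    rw [sum_range_succ, ih]
    rcases lt_trichotomy (n + 1) k with h | rfl | h
    · rw [if_pos (by omega), if_pos h, chainMeanFormula_of_lt h, add_zero]
    · rw [if_pos (by omega), if_neg (lt_irrefl _), chainMeanFormula_self]
      push_cast
      ring
    · rw [if_neg (by omega), if_neg (by omega), chainMeanFormula_of_gt h]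
      push_cast
      ring

theorem chainMeanFormula_succ_succ (k n : ℕ) :
    chainMeanFormula (k + 1) (n + 1) = 2 * chainMeanFormula k n / ((n : ℝ) + 1) +
      2 * (∑ i ∈ range (n + 1), chainMeanFormula (k + 1) i) / ((n : ℝ) + 1) := by
  rw [sum_range_chainMeanFormula]
  rcases lt_trichotomy n k with h | rfl | h
  · rw [chainMeanFormula_of_lt (by omega), chainMeanFormula_of_lt h, if_pos (by omega)]
    simp
  · rw [chainMeanFormula_self, chainMeanFormula_self, if_pos (by omega), pathProb_succ]
    ring
  · rw [chainMeanFormula_of_gt (by omega), chainMeanFormula_of_gt h, if_neg (by omega),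
      chainSlope, chainSlope, chainIntercept, chainIntercept, pathProb_succ]
    push_cast
    field_simp
    ring

theorem rootChainMean_one_succ_eq (n : ℕ) :
    rootChainMean 1 (n + 1) = 2 * chainMeanFormula 0 n / ((n : ℝ) + 1) := by
  rw [rootChainMean_one_succ]
  rcases eq_or_ne n 0 with rfl | hn
  · norm_num [chainMeanFormula_self, pathProb]
  · rw [if_neg hn, chainMeanFormula_of_gt (Nat.pos_of_ne_zero hn), chainSlope, chainIntercept]
    norm_num [pathProb]

theorem chainMean_eq_chainMeanFormula (k n : ℕ) :
    chainMean (k + 1) n = chainMeanFormula (k + 1) n := by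
  induction n using Nat.strong_induction_on generalizing k with
  | _ n ih =>
    cases n with
    | zero => rw [chainMean_zero, chainMeanFormula_of_lt k.succ_pos]
    | succ n =>
      have hroot : rootChainMean (k + 1) (n + 1) = 2 * chainMeanFormula k n / ((n : ℝ) + 1) := by
        cases k with
        | zero => exact rootChainMean_one_succ_eq n
        | succ k => rw [rootChainMean_add_two_succ, ih n n.lt_succ_self]
      rw [chainMean_succ, hroot, chainMeanFormula_succ_succ,
        sum_congr rfl fun i hi => ih i (mem_range.1 hi) k]

theorem rootChainMean_succ_eq (j n : ℕ) :
    rootChainMean (j + 1) (n + 1) = 2 * chainMeanFormula j n / ((n : ℝ) + 1) := by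
  cases j with
  | zero => exact rootChainMean_one_succ_eq n
  | succ j => rw [rootChainMean_add_two_succ, chainMean_eq_chainMeanFormula]

noncomputable def sizeWeight (n : ℕ) : ℝ := 2 / (((n : ℝ) + 2) * ((n : ℝ) + 3))

theorem integral_cT_natCast (g : BTree → ℕ) :
    ∫ t, (g t : ℝ) ∂cT =
      ∑' n, sizeWeight n * ((bst (n + 1)).lexpect fun t => (g t : ℝ≥0∞)).toReal := by
  have hlintegral : ∫⁻ t, ENNReal.ofReal (g t) ∂cT =
      ∑' n, ENNReal.ofReal (sizeWeight n) *
        (bst (n + 1)).lexpect fun t => (g t : ℝ≥0∞) := by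
    simp only [cT, ENNReal.ofReal_natCast, lintegral_sum_measure, lintegral_smul_measure,
      PMF.lintegral_toMeasure_eq_lexpect, smul_eq_mul]
    rfl
  rw [integral_eq_lintegral_of_nonneg_ae (ae_of_all _ fun t => Nat.cast_nonneg _)
      (measurable_of_countable _).aestronglyMeasurable, hlintegral,
    ENNReal.tsum_toReal_eq fun n => ENNReal.mul_ne_top ENNReal.ofReal_ne_top
      (lexpect_bst_natCast_ne_top _ _)]
  simp only [ENNReal.toReal_mul, ENNReal.toReal_ofReal (show 0 ≤ sizeWeight _ by
    unfold sizeWeight; positivity)]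

theorem sum_range_sizeWeight_mul_chainMeanFormula (j : ℕ) {N : ℕ} (hN : j + 1 ≤ N) :
    ∑ n ∈ range N, sizeWeight n * (2 * chainMeanFormula j n / ((n : ℝ) + 1)) =
      chainSlope (j + 1) - (4 * chainSlope j / ((N : ℝ) + 2) +
        2 * (chainIntercept j - chainSlope j) / (((N : ℝ) + 1) * ((N : ℝ) + 2))) := by
  induction N, hN using Nat.le_induction with
  | base =>
    rw [sum_range_succ, sum_eq_zero fun n hn => by
      rw [chainMeanFormula_of_lt (mem_range.1 hn), mul_zero, zero_div, mul_zero],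
      chainMeanFormula_self, sizeWeight, chainSlope, chainSlope, chainIntercept, pathProb_succ]
    push_cast
    field_simp
    ring
  | succ N hN ih =>
    rw [sum_range_succ, ih, chainMeanFormula_of_gt (by omega), sizeWeight]
    push_cast
    field_simp
    ring

theorem hasSum_sizeWeight_mul_rootChainMean (j : ℕ) :
    HasSum (fun n => sizeWeight n * rootChainMean (j + 1) (n + 1)) (chainSlope (j + 1)) := by
  have hnonneg (n : ℕ) : 0 ≤ sizeWeight n * rootChainMean (j + 1) (n + 1) :=
    mul_nonneg (by unfold sizeWeight; positivity) ENNReal.toReal_nonneg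
  rw [hasSum_iff_tendsto_nat_of_nonneg hnonneg]
  have hN1 : Tendsto (fun N : ℕ => (N : ℝ) + 1) atTop atTop :=
    tendsto_atTop_add_const_right _ _ tendsto_natCast_atTop_atTop
  have hN2 : Tendsto (fun N : ℕ => (N : ℝ) + 2) atTop atTop :=
    tendsto_atTop_add_const_right _ _ tendsto_natCast_atTop_atTop
  have htail := (tendsto_const_nhds (x := 4 * chainSlope j)).div_atTop hN2 |>.add <|
    (tendsto_const_nhds (x := 2 * (chainIntercept j - chainSlope j))).div_atTop
      (hN1.atTop_mul_atTop₀ hN2)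
  rw [add_zero] at htail
  have hlimit := tendsto_const_nhds (x := chainSlope (j + 1)) |>.sub htail
  rw [sub_zero] at hlimit
  refine hlimit.congr' ?_
  filter_upwards [eventually_ge_atTop (j + 1)] with N hN
  simp only [rootChainMean_succ_eq]
  exact (sum_range_sizeWeight_mul_chainMeanFormula j hN).symm

theorem pathProb_eq {k : ℕ} (hk : k ≠ 0) : pathProb k = 2 ^ (k - 1) / (k ! : ℝ) := by
  obtain ⟨k, rfl⟩ := Nat.exists_eq_succ_of_ne_zero hk
  rw [pathProb, pow_succ, Nat.succ_sub_one]
  field_simp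

theorem chainSlope_eq_sub {k : ℕ} (hk : k ≠ 0) :
    chainSlope k = 2 ^ (k - 1) / (k ! : ℝ) - 2 ^ k / ((k + 2)! : ℝ) := by
  obtain ⟨k, rfl⟩ := Nat.exists_eq_succ_of_ne_zero hk
  rw [chainSlope, pathProb_eq hk, Nat.succ_sub_one, pow_succ, Nat.factorial_succ (k + 1 + 1),
    Nat.factorial_succ (k + 1)]
  push_cast
  field_simp
  ring

end BTree

open BTree in
/-- `E f_k(𝒯) = k(k+3)/((k+1)(k+2)) · 2^{k−1}/k! = 2^{k−1}/k! − 2^k/(k+2)!`. -/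
theorem expectation_fchain (k : ℕ) (hk : 1 ≤ k) :
    (∫ t, (fchain k t : ℝ) ∂cT
      = ((k : ℝ) * (k + 3)) / (((k : ℝ) + 1) * ((k : ℝ) + 2))
          * (2 ^ (k - 1) / (Nat.factorial k : ℝ))) ∧
    (∫ t, (fchain k t : ℝ) ∂cT
      = 2 ^ (k - 1) / (Nat.factorial k : ℝ) - 2 ^ k / (Nat.factorial (k + 2) : ℝ)) := by
  obtain ⟨j, rfl⟩ : ∃ j, k = j + 1 := ⟨k - 1, by omega⟩
  have hmean : ∫ t, (fchain (j + 1) t : ℝ) ∂cT = chainSlope (j + 1) := by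
    rw [integral_cT_natCast]
    exact (hasSum_sizeWeight_mul_rootChainMean j).tsum_eq
  rw [hmean]
  exact ⟨by rw [chainSlope, pathProb_eq j.succ_ne_zero], chainSlope_eq_sub j.succ_ne_zero⟩
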